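/- Suppose 𝒯 and 𝒰 are multisets of n-th roots of unity with |𝒯| = |𝒰|, and the multisets {Σ_{φ∈𝒯} φ^r : 1 ≤ r ≤ n} and {Σ_{ψ∈𝒰} ψ^r : 1 ≤ r ≤ n} are equal. Then the lcm m_𝒯 of the orders of the elements of 𝒯 equals the lcm m_𝒰 of the orders of the elements of 𝒰; moreover the multiset {Σ_{φ∈𝒯} φ^r : 1 ≤ r ≤ n} consists of n/m_𝒯 copies of {Σ_{φ∈𝒯} φ^r : 1 ≤ r ≤ m_𝒯}. -/

import Mathlib

/-!
Every `φ ∈ 𝒯` has norm `1`, so comparing real parts shows that the power sum `∑_{φ ∈ 𝒯} φ^r`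
equals `|𝒯|` exactly when every `φ^r = 1`, i.e. when `m_𝒯 ∣ r`. Hence the value `|𝒯|` occurs
exactly `n / m_𝒯` times among the power sums for `1 ≤ r ≤ n`, and likewise `|𝒰| = |𝒯|` occurs
`n / m_𝒰` times; as `m_𝒯` and `m_𝒰` divide `n`, this forces `m_𝒯 = m_𝒰`. The second claim is
the `m_𝒯`-periodicity of `r ↦ ∑_{φ ∈ 𝒯} φ^r`.
-/

open Finset

lemma Complex.re_lt_one_of_norm_le_one {w : ℂ} (hw : ‖w‖ ≤ 1) (hne : w ≠ 1) : w.re < 1 := by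
  refine (w.re_le_norm.trans hw).lt_of_ne fun hre => hne (Complex.ext hre ?_)
  have him : w.im ^ 2 ≤ 0 := by
    nlinarith [Complex.sq_norm w, Complex.normSq_apply w, norm_nonneg w]
  simpa using le_antisymm him (sq_nonneg _)

lemma Multiset.sum_eq_card_iff_forall_eq_one {S : Multiset ℂ} (hS : ∀ w ∈ S, ‖w‖ ≤ 1) :
    S.sum = Multiset.card S ↔ ∀ w ∈ S, w = 1 := by
  refine ⟨fun hsum => ?_, fun h => by rw [Multiset.eq_replicate_card.2 h]; simp⟩
  by_contra! ⟨w, hw, hne⟩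
  have hlt : (S.map Complex.re).sum < (S.map fun _ => (1 : ℝ)).sum :=
    Multiset.sum_lt_sum (fun x hx => x.re_le_norm.trans (hS x hx))
      ⟨w, hw, Complex.re_lt_one_of_norm_le_one (hS w hw) hne⟩
  have hre : (S.map Complex.re).sum = Multiset.card S := by
    simpa [hsum] using (map_multiset_sum Complex.reAddGroupHom S).symm
  simp [hre] at hlt

lemma Multiset.lcm_map_orderOf_dvd_iff {M : Type*} [Monoid M] {S : Multiset M} {r : ℕ} :
    (S.map orderOf).lcm ∣ r ↔ ∀ z ∈ S, z ^ r = 1 := by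
  simp [Multiset.lcm_dvd, orderOf_dvd_iff_pow_eq_one]

lemma Function.Periodic.map_Ico_mul {α : Type*} {f : ℕ → α} {m : ℕ}
    (hf : Function.Periodic f m) (a k : ℕ) :
    (Multiset.Ico a (a + k * m)).map f = k • (Multiset.Ico a (a + m)).map f := by
  induction k with
  | zero => simp
  | succ k ih =>
    have hblock : (Multiset.Ico (a + k * m) (a + (k + 1) * m)).map f
        = (Multiset.Ico a (a + m)).map f := by
      rw [show a + (k + 1) * m = k * m + (a + m) by ring, add_comm a, ← Multiset.map_add_left_Ico,
        Multiset.map_map]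
      exact Multiset.map_congr rfl fun x _ => by simpa [add_comm] using hf.nat_mul k x
    rw [← Multiset.Ico_add_Ico_eq_Ico (b := a + k * m) (Nat.le_add_right a _) (by gcongr; omega),
      Multiset.map_add, ih, hblock, succ_nsmul]

lemma Function.Periodic.map_Icc_one_mul {α : Type*} {f : ℕ → α} {m : ℕ}
    (hf : Function.Periodic f m) (k : ℕ) :
    (Icc 1 (k * m)).val.map f = k • (Icc 1 m).val.map f := by
  have hIcc (j : ℕ) : (Icc 1 j).val = Multiset.Ico 1 (1 + j) := by rw [add_comm]; rfl
  rw [hIcc, hIcc, hf.map_Ico_mul]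

namespace Multiset

def psum {R : Type*} [Semiring R] (S : Multiset R) (r : ℕ) : R :=
  (S.map (· ^ r)).sum

lemma psum_periodic {R : Type*} [Semiring R] (S : Multiset R) :
    Function.Periodic S.psum (S.map orderOf).lcm := fun r => by
  refine congrArg Multiset.sum (Multiset.map_congr rfl fun z hz => ?_)
  rw [pow_add, lcm_map_orderOf_dvd_iff.1 dvd_rfl z hz, mul_one]

variable {n : ℕ} {T : Multiset ℂ}

lemma psum_eq_card_iff (hn : n ≠ 0) (hT : ∀ z ∈ T, z ^ n = 1) (r : ℕ) :
    T.psum r = card T ↔ (T.map orderOf).lcm ∣ r := by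
  have hnorm : ∀ w ∈ T.map (· ^ r), ‖w‖ ≤ 1 := forall_mem_map_iff.2 fun z hz => by
    rw [norm_pow, Complex.norm_eq_one_of_pow_eq_one (hT z hz) hn, one_pow]
  rw [lcm_map_orderOf_dvd_iff, psum, ← card_map (· ^ r), sum_eq_card_iff_forall_eq_one hnorm]
  simp

lemma count_card_map_psum (hn : n ≠ 0) (hT : ∀ z ∈ T, z ^ n = 1) :
    ((Finset.Icc 1 n).val.map T.psum).count (card T : ℂ) = n / (T.map orderOf).lcm := by
  rw [count_map, filter_congr fun r _ => eq_comm.trans (psum_eq_card_iff hn hT r)]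
  exact Nat.Ioc_filter_dvd_card_eq_div n _

end Multiset

/-- If two same-size multisets of `n`-th roots of unity have equal multisets
of power-sums `{∑ φ^r : 1 ≤ r ≤ n}`, then the lcms of the orders of their
elements agree, and the power-sum multiset consists of `n/m` copies of the
power sums for `1 ≤ r ≤ m`, where `m` is this lcm. -/
theorem lcm_trick (n : ℕ) (hn : 0 < n) (T U : Multiset ℂ)
    (hT : ∀ z ∈ T, z ^ n = 1) (hU : ∀ z ∈ U, z ^ n = 1)
    (hcard : Multiset.card T = Multiset.card U)
    (h : ((Finset.Icc 1 n).val.map fun r => (T.map (· ^ r)).sum)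
       = ((Finset.Icc 1 n).val.map fun r => (U.map (· ^ r)).sum)) :
    (T.map orderOf).lcm = (U.map orderOf).lcm ∧
    ((Finset.Icc 1 n).val.map fun r => (T.map (· ^ r)).sum)
      = (n / (T.map orderOf).lcm) •
          ((Finset.Icc 1 ((T.map orderOf).lcm)).val.map
            fun r => (T.map (· ^ r)).sum) := by
  change (Icc 1 n).val.map T.psum = (Icc 1 n).val.map U.psum at h
  change _ ∧ (Icc 1 n).val.map T.psum = _ • (Icc 1 _).val.map T.psum
  have hTn : (T.map orderOf).lcm ∣ n := Multiset.lcm_map_orderOf_dvd_iff.2 hT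
  have hUn : (U.map orderOf).lcm ∣ n := Multiset.lcm_map_orderOf_dvd_iff.2 hU
  have hdiv : n / (T.map orderOf).lcm = n / (U.map orderOf).lcm := by
    rw [← Multiset.count_card_map_psum hn.ne' hT, ← Multiset.count_card_map_psum hn.ne' hU, h,
      hcard]
  refine ⟨?_, ?_⟩
  · rw [← Nat.div_div_self hTn hn.ne', hdiv, Nat.div_div_self hUn hn.ne']
  · conv_lhs => rw [← Nat.div_mul_cancel hTn]
    exact T.psum_periodic.map_Icc_one_mul _
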